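/- Let d be a derivation of the quantum octonion algebra O_q with d(e₁) = 0 = d(e₂), where e₁ = q^{-1/2}x₄, e₂ = −q^{1/2}x₋₄. Then there exist scalars b, c ∈ K such that d(x₁) = b·x₁, d(x₋₁) = −b·x₋₁, d(x₂) = c·x₂, d(x₋₂) = −c·x₋₂, d(x₃) = (b−c)·x₃, d(x₋₃) = −(b−c)·x₋₃. -/

import Mathlib

/-- Basis vector `x_k` of the 8-dimensional space. Index correspondence:
`0 ↦ x₁, 1 ↦ x₂, 2 ↦ x₃, 3 ↦ x₄, 4 ↦ x₋₄, 5 ↦ x₋₃, 6 ↦ x₋₂, 7 ↦ x₋₁`. -/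
noncomputable def bx {K : Type*} [Field K] (k : Fin 8) : Fin 8 → K := Pi.single k 1

/-- Structure constants of the quantum octonion algebra (Table 3.9),
with `s = q^{1/2}`. -/
noncomputable def octTab {K : Type*} [Field K] (s : K) : Fin 8 → Fin 8 → Fin 8 → K :=
  ![![0, 0, 0, s⁻¹^3 • bx 0, 0, s⁻¹^3 • bx 1, s⁻¹^3 • bx 2, s⁻¹^3 • bx 4],
    ![0, 0, (-s⁻¹) • bx 0, 0, (-s⁻¹) • bx 1, 0, s⁻¹^3 • bx 3, s⁻¹^3 • bx 5],
    ![0, s • bx 0, 0, 0, (-s⁻¹) • bx 2, (-s⁻¹) • bx 3, 0, s⁻¹^3 • bx 6],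
    ![0, s • bx 1, s • bx 2, s • bx 3, 0, 0, 0, s⁻¹^3 • bx 7],
    ![(-s^3) • bx 0, 0, 0, 0, (-s⁻¹) • bx 4, (-s⁻¹) • bx 5, (-s⁻¹) • bx 6, 0],
    ![(-s^3) • bx 1, 0, s • bx 4, s • bx 5, 0, 0, (-s⁻¹) • bx 7, 0],
    ![(-s^3) • bx 2, (-s^3) • bx 4, 0, s • bx 6, 0, s • bx 7, 0, 0],
    ![(-s^3) • bx 3, (-s^3) • bx 5, (-s^3) • bx 6, 0, (-s^3) • bx 7, 0, 0, 0]]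

/-- The quantum octonion multiplication (Table 3.9), extended bilinearly. -/
noncomputable def octMul {K : Type*} [Field K] (s : K) (a b : Fin 8 → K) : Fin 8 → K :=
  ∑ i : Fin 8, ∑ j : Fin 8, (a i * b j) • octTab s i j

set_option maxHeartbeats 1000000

@[simp] lemma octTab_0_0 {K : Type*} [Field K] (s : K) : octTab s 0 0 = (0 : Fin 8 → K) := rfl
@[simp] lemma octTab_0_1 {K : Type*} [Field K] (s : K) : octTab s 0 1 = (0 : Fin 8 → K) := rfl
@[simp] lemma octTab_0_2 {K : Type*} [Field K] (s : K) : octTab s 0 2 = (0 : Fin 8 → K) := rfl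
@[simp] lemma octTab_0_3 {K : Type*} [Field K] (s : K) : octTab s 0 3 = s⁻¹^3 • bx 0 := rfl
@[simp] lemma octTab_0_4 {K : Type*} [Field K] (s : K) : octTab s 0 4 = (0 : Fin 8 → K) := rfl
@[simp] lemma octTab_0_5 {K : Type*} [Field K] (s : K) : octTab s 0 5 = s⁻¹^3 • bx 1 := rfl
@[simp] lemma octTab_0_6 {K : Type*} [Field K] (s : K) : octTab s 0 6 = s⁻¹^3 • bx 2 := rfl
@[simp] lemma octTab_0_7 {K : Type*} [Field K] (s : K) : octTab s 0 7 = s⁻¹^3 • bx 4 := rfl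
@[simp] lemma octTab_1_0 {K : Type*} [Field K] (s : K) : octTab s 1 0 = (0 : Fin 8 → K) := rfl
@[simp] lemma octTab_1_1 {K : Type*} [Field K] (s : K) : octTab s 1 1 = (0 : Fin 8 → K) := rfl
@[simp] lemma octTab_1_2 {K : Type*} [Field K] (s : K) : octTab s 1 2 = (-s⁻¹) • bx 0 := rfl
@[simp] lemma octTab_1_3 {K : Type*} [Field K] (s : K) : octTab s 1 3 = (0 : Fin 8 → K) := rfl
@[simp] lemma octTab_1_4 {K : Type*} [Field K] (s : K) : octTab s 1 4 = (-s⁻¹) • bx 1 := rfl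
@[simp] lemma octTab_1_5 {K : Type*} [Field K] (s : K) : octTab s 1 5 = (0 : Fin 8 → K) := rfl
@[simp] lemma octTab_1_6 {K : Type*} [Field K] (s : K) : octTab s 1 6 = s⁻¹^3 • bx 3 := rfl
@[simp] lemma octTab_1_7 {K : Type*} [Field K] (s : K) : octTab s 1 7 = s⁻¹^3 • bx 5 := rfl
@[simp] lemma octTab_2_0 {K : Type*} [Field K] (s : K) : octTab s 2 0 = (0 : Fin 8 → K) := rfl
@[simp] lemma octTab_2_1 {K : Type*} [Field K] (s : K) : octTab s 2 1 = s • bx 0 := rfl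
@[simp] lemma octTab_2_2 {K : Type*} [Field K] (s : K) : octTab s 2 2 = (0 : Fin 8 → K) := rfl
@[simp] lemma octTab_2_3 {K : Type*} [Field K] (s : K) : octTab s 2 3 = (0 : Fin 8 → K) := rfl
@[simp] lemma octTab_2_4 {K : Type*} [Field K] (s : K) : octTab s 2 4 = (-s⁻¹) • bx 2 := rfl
@[simp] lemma octTab_2_5 {K : Type*} [Field K] (s : K) : octTab s 2 5 = (-s⁻¹) • bx 3 := rfl
@[simp] lemma octTab_2_6 {K : Type*} [Field K] (s : K) : octTab s 2 6 = (0 : Fin 8 → K) := rfl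
@[simp] lemma octTab_2_7 {K : Type*} [Field K] (s : K) : octTab s 2 7 = s⁻¹^3 • bx 6 := rfl
@[simp] lemma octTab_3_0 {K : Type*} [Field K] (s : K) : octTab s 3 0 = (0 : Fin 8 → K) := rfl
@[simp] lemma octTab_3_1 {K : Type*} [Field K] (s : K) : octTab s 3 1 = s • bx 1 := rfl
@[simp] lemma octTab_3_2 {K : Type*} [Field K] (s : K) : octTab s 3 2 = s • bx 2 := rfl
@[simp] lemma octTab_3_3 {K : Type*} [Field K] (s : K) : octTab s 3 3 = s • bx 3 := rfl
@[simp] lemma octTab_3_4 {K : Type*} [Field K] (s : K) : octTab s 3 4 = (0 : Fin 8 → K) := rfl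
@[simp] lemma octTab_3_5 {K : Type*} [Field K] (s : K) : octTab s 3 5 = (0 : Fin 8 → K) := rfl
@[simp] lemma octTab_3_6 {K : Type*} [Field K] (s : K) : octTab s 3 6 = (0 : Fin 8 → K) := rfl
@[simp] lemma octTab_3_7 {K : Type*} [Field K] (s : K) : octTab s 3 7 = s⁻¹^3 • bx 7 := rfl
@[simp] lemma octTab_4_0 {K : Type*} [Field K] (s : K) : octTab s 4 0 = (-s^3) • bx 0 := rfl
@[simp] lemma octTab_4_1 {K : Type*} [Field K] (s : K) : octTab s 4 1 = (0 : Fin 8 → K) := rfl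
@[simp] lemma octTab_4_2 {K : Type*} [Field K] (s : K) : octTab s 4 2 = (0 : Fin 8 → K) := rfl
@[simp] lemma octTab_4_3 {K : Type*} [Field K] (s : K) : octTab s 4 3 = (0 : Fin 8 → K) := rfl
@[simp] lemma octTab_4_4 {K : Type*} [Field K] (s : K) : octTab s 4 4 = (-s⁻¹) • bx 4 := rfl
@[simp] lemma octTab_4_5 {K : Type*} [Field K] (s : K) : octTab s 4 5 = (-s⁻¹) • bx 5 := rfl
@[simp] lemma octTab_4_6 {K : Type*} [Field K] (s : K) : octTab s 4 6 = (-s⁻¹) • bx 6 := rfl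
@[simp] lemma octTab_4_7 {K : Type*} [Field K] (s : K) : octTab s 4 7 = (0 : Fin 8 → K) := rfl
@[simp] lemma octTab_5_0 {K : Type*} [Field K] (s : K) : octTab s 5 0 = (-s^3) • bx 1 := rfl
@[simp] lemma octTab_5_1 {K : Type*} [Field K] (s : K) : octTab s 5 1 = (0 : Fin 8 → K) := rfl
@[simp] lemma octTab_5_2 {K : Type*} [Field K] (s : K) : octTab s 5 2 = s • bx 4 := rfl
@[simp] lemma octTab_5_3 {K : Type*} [Field K] (s : K) : octTab s 5 3 = s • bx 5 := rfl
@[simp] lemma octTab_5_4 {K : Type*} [Field K] (s : K) : octTab s 5 4 = (0 : Fin 8 → K) := rfl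
@[simp] lemma octTab_5_5 {K : Type*} [Field K] (s : K) : octTab s 5 5 = (0 : Fin 8 → K) := rfl
@[simp] lemma octTab_5_6 {K : Type*} [Field K] (s : K) : octTab s 5 6 = (-s⁻¹) • bx 7 := rfl
@[simp] lemma octTab_5_7 {K : Type*} [Field K] (s : K) : octTab s 5 7 = (0 : Fin 8 → K) := rfl
@[simp] lemma octTab_6_0 {K : Type*} [Field K] (s : K) : octTab s 6 0 = (-s^3) • bx 2 := rfl
@[simp] lemma octTab_6_1 {K : Type*} [Field K] (s : K) : octTab s 6 1 = (-s^3) • bx 4 := rfl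
@[simp] lemma octTab_6_2 {K : Type*} [Field K] (s : K) : octTab s 6 2 = (0 : Fin 8 → K) := rfl
@[simp] lemma octTab_6_3 {K : Type*} [Field K] (s : K) : octTab s 6 3 = s • bx 6 := rfl
@[simp] lemma octTab_6_4 {K : Type*} [Field K] (s : K) : octTab s 6 4 = (0 : Fin 8 → K) := rfl
@[simp] lemma octTab_6_5 {K : Type*} [Field K] (s : K) : octTab s 6 5 = s • bx 7 := rfl
@[simp] lemma octTab_6_6 {K : Type*} [Field K] (s : K) : octTab s 6 6 = (0 : Fin 8 → K) := rfl
@[simp] lemma octTab_6_7 {K : Type*} [Field K] (s : K) : octTab s 6 7 = (0 : Fin 8 → K) := rfl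
@[simp] lemma octTab_7_0 {K : Type*} [Field K] (s : K) : octTab s 7 0 = (-s^3) • bx 3 := rfl
@[simp] lemma octTab_7_1 {K : Type*} [Field K] (s : K) : octTab s 7 1 = (-s^3) • bx 5 := rfl
@[simp] lemma octTab_7_2 {K : Type*} [Field K] (s : K) : octTab s 7 2 = (-s^3) • bx 6 := rfl
@[simp] lemma octTab_7_3 {K : Type*} [Field K] (s : K) : octTab s 7 3 = (0 : Fin 8 → K) := rfl
@[simp] lemma octTab_7_4 {K : Type*} [Field K] (s : K) : octTab s 7 4 = (-s^3) • bx 7 := rfl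
@[simp] lemma octTab_7_5 {K : Type*} [Field K] (s : K) : octTab s 7 5 = (0 : Fin 8 → K) := rfl
@[simp] lemma octTab_7_6 {K : Type*} [Field K] (s : K) : octTab s 7 6 = (0 : Fin 8 → K) := rfl
@[simp] lemma octTab_7_7 {K : Type*} [Field K] (s : K) : octTab s 7 7 = (0 : Fin 8 → K) := rfl
@[simp] lemma bx_apply {K : Type*} [Field K] (m k : Fin 8) : (bx m : Fin 8 → K) k = if k = m then 1 else 0 := by
  simp [bx, Pi.single_apply]
lemma octMul_right {K : Type*} [Field K] (s : K) (a : Fin 8 → K) (j : Fin 8) :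
    octMul s a (bx j) = ∑ i : Fin 8, a i • octTab s i j := by
  simp only [octMul, bx]
  simp [Pi.single_apply, mul_ite, ite_smul, Finset.sum_ite_eq']
lemma octMul_left {K : Type*} [Field K] (s : K) (i : Fin 8) (b : Fin 8 → K) :
    octMul s (bx i) b = ∑ j : Fin 8, b j • octTab s i j := by
  simp only [octMul, bx]
  simp [Pi.single_apply, ite_mul, ite_smul, Finset.sum_ite_eq']
lemma octMul_bx {K : Type*} [Field K] (s : K) (i j : Fin 8) :
    octMul s (bx i) (bx j) = octTab s i j := by
  simp only [octMul, bx]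
  simp [Pi.single_apply, ite_mul, mul_ite, ite_smul, Finset.sum_ite_eq']


/-- Any derivation of `O_q` killing the idempotents `e₁ = q^{-1/2}x₄` and
`e₂ = −q^{1/2}x₋₄` has the form (6.3): `d(x₁) = b x₁`, `d(x₋₁) = −b x₋₁`,
`d(x₂) = c x₂`, `d(x₋₂) = −c x₋₂`, `d(x₃) = (b−c) x₃`, `d(x₋₃) = −(b−c) x₋₃`. -/
theorem quantum_octonion_derivation_killing_idempotents
    {K : Type*} [Field K] (s : K) (hs : s ≠ 0)
    (hroot : ∀ m : ℕ, m ≠ 0 → (s ^ 2) ^ m ≠ 1)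
    (d : (Fin 8 → K) →ₗ[K] (Fin 8 → K))
    (hder : ∀ a b : Fin 8 → K, d (octMul s a b) = octMul s (d a) b + octMul s a (d b))
    (he1 : d (s⁻¹ • bx 3) = 0) (he2 : d ((-s) • bx 4) = 0) :
    ∃ b c : K,
      d (bx 0) = b • bx 0 ∧ d (bx 7) = (-b) • bx 7 ∧
      d (bx 1) = c • bx 1 ∧ d (bx 6) = (-c) • bx 6 ∧
      d (bx 2) = (b - c) • bx 2 ∧ d (bx 5) = (-(b - c)) • bx 5 := by
  have hS : s ^ 4 ≠ 1 := fun h => hroot 2 (by norm_num) (by rw [← h]; ring)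
  have hd3 : d (bx 3) = 0 := by
    have h := he1; rw [map_smul, smul_eq_zero] at h
    exact h.resolve_left (inv_ne_zero hs)
  have hd4 : d (bx 4) = 0 := by
    have h := he2; rw [map_smul, smul_eq_zero] at h
    exact h.resolve_left (neg_ne_zero.mpr hs)
  have hcanc : ∀ x : K, x * (s ^ 4 - 1) = 0 → x = 0 := by
    intro x h
    rcases mul_eq_zero.mp h with h' | h'
    · exact h'
    · exact absurd (sub_eq_zero.mp h') hS
  have key : ∀ i j : Fin 8, d (octTab s i j) = octMul s (d (bx i)) (bx j) + octMul s (bx i) (d (bx j)) :=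
    fun i j => by rw [← octMul_bx s i j]; exact hder _ _

  have h03 := key 0 3
  rw [octTab_0_3, map_smul, octMul_right, octMul_left] at h03
  simp only [Fin.sum_univ_eight, hd3, hd4] at h03
  have h03_1 := congrFun h03 1
  simp at h03_1
  have h03_2 := congrFun h03 2
  simp at h03_2
  have h03_3 := congrFun h03 3
  simp at h03_3
  have h03_4 := congrFun h03 4
  simp at h03_4
  have h03_5 := congrFun h03 5
  simp at h03_5
  have h03_6 := congrFun h03 6
  simp at h03_6
  have h03_7 := congrFun h03 7
  simp at h03_7
  clear h03
  have h37 := key 3 7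
  rw [octTab_3_7, map_smul, octMul_right, octMul_left] at h37
  simp only [Fin.sum_univ_eight, hd3, hd4] at h37
  have h37_0 := congrFun h37 0
  simp at h37_0
  have h37_1 := congrFun h37 1
  simp at h37_1
  have h37_2 := congrFun h37 2
  simp at h37_2
  have h37_3 := congrFun h37 3
  simp at h37_3
  have h37_4 := congrFun h37 4
  simp at h37_4
  have h37_5 := congrFun h37 5
  simp at h37_5
  have h37_6 := congrFun h37 6
  simp at h37_6
  clear h37
  have h31 := key 3 1
  rw [octTab_3_1, map_smul, octMul_right, octMul_left] at h31
  simp only [Fin.sum_univ_eight, hd3, hd4] at h31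
  have h31_0 := congrFun h31 0
  simp at h31_0
  have h31_4 := congrFun h31 4
  simp at h31_4
  have h31_5 := congrFun h31 5
  simp at h31_5
  have h31_6 := congrFun h31 6
  simp at h31_6
  have h31_7 := congrFun h31 7
  simp at h31_7
  clear h31
  have h14 := key 1 4
  rw [octTab_1_4, map_smul, octMul_right, octMul_left] at h14
  simp only [Fin.sum_univ_eight, hd3, hd4] at h14
  have h14_3 := congrFun h14 3
  simp at h14_3
  clear h14
  have h32 := key 3 2
  rw [octTab_3_2, map_smul, octMul_right, octMul_left] at h32
  simp only [Fin.sum_univ_eight, hd3, hd4] at h32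
  have h32_0 := congrFun h32 0
  simp at h32_0
  have h32_4 := congrFun h32 4
  simp at h32_4
  have h32_5 := congrFun h32 5
  simp at h32_5
  have h32_6 := congrFun h32 6
  simp at h32_6
  have h32_7 := congrFun h32 7
  simp at h32_7
  clear h32
  have h24 := key 2 4
  rw [octTab_2_4, map_smul, octMul_right, octMul_left] at h24
  simp only [Fin.sum_univ_eight, hd3, hd4] at h24
  have h24_3 := congrFun h24 3
  simp at h24_3
  clear h24
  have h53 := key 5 3
  rw [octTab_5_3, map_smul, octMul_right, octMul_left] at h53
  simp only [Fin.sum_univ_eight, hd3, hd4] at h53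
  have h53_0 := congrFun h53 0
  simp at h53_0
  have h53_1 := congrFun h53 1
  simp at h53_1
  have h53_2 := congrFun h53 2
  simp at h53_2
  have h53_4 := congrFun h53 4
  simp at h53_4
  have h53_7 := congrFun h53 7
  simp at h53_7
  clear h53
  have h35 := key 3 5
  rw [octTab_3_5, map_zero, octMul_right, octMul_left] at h35
  simp only [Fin.sum_univ_eight, hd3, hd4] at h35
  have h35_3 := congrFun h35 3
  simp at h35_3
  clear h35
  have h63 := key 6 3
  rw [octTab_6_3, map_smul, octMul_right, octMul_left] at h63
  simp only [Fin.sum_univ_eight, hd3, hd4] at h63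
  have h63_0 := congrFun h63 0
  simp at h63_0
  have h63_1 := congrFun h63 1
  simp at h63_1
  have h63_2 := congrFun h63 2
  simp at h63_2
  have h63_4 := congrFun h63 4
  simp at h63_4
  have h63_7 := congrFun h63 7
  simp at h63_7
  clear h63
  have h36 := key 3 6
  rw [octTab_3_6, map_zero, octMul_right, octMul_left] at h36
  simp only [Fin.sum_univ_eight, hd3, hd4] at h36
  have h36_3 := congrFun h36 3
  simp at h36_3
  clear h36
  have h15 := key 1 5
  rw [octTab_1_5, map_zero, octMul_right, octMul_left] at h15
  simp only [Fin.sum_univ_eight, hd3, hd4] at h15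
  have h15_3 := congrFun h15 3
  simp at h15_3
  clear h15
  have h51 := key 5 1
  rw [octTab_5_1, map_zero, octMul_right, octMul_left] at h51
  simp only [Fin.sum_univ_eight, hd3, hd4] at h51
  have h51_4 := congrFun h51 4
  simp at h51_4
  clear h51
  have h26 := key 2 6
  rw [octTab_2_6, map_zero, octMul_right, octMul_left] at h26
  simp only [Fin.sum_univ_eight, hd3, hd4] at h26
  have h26_3 := congrFun h26 3
  simp at h26_3
  clear h26
  have h62 := key 6 2
  rw [octTab_6_2, map_zero, octMul_right, octMul_left] at h62
  simp only [Fin.sum_univ_eight, hd3, hd4] at h62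
  have h62_4 := congrFun h62 4
  simp at h62_4
  clear h62
  have h12 := key 1 2
  rw [octTab_1_2, map_smul, octMul_right, octMul_left] at h12
  simp only [Fin.sum_univ_eight, hd3, hd4] at h12
  have h12_0 := congrFun h12 0
  simp at h12_0
  clear h12
  have h16 := key 1 6
  rw [octTab_1_6, map_smul, octMul_right, octMul_left] at h16
  simp only [Fin.sum_univ_eight, hd3, hd4] at h16
  have h16_3 := congrFun h16 3
  simp at h16_3
  clear h16
  have h25 := key 2 5
  rw [octTab_2_5, map_smul, octMul_right, octMul_left] at h25
  simp only [Fin.sum_univ_eight, hd3, hd4] at h25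
  have h25_3 := congrFun h25 3
  simp at h25_3
  clear h25
  have h07 := key 0 7
  rw [octTab_0_7, map_smul, octMul_right, octMul_left] at h07
  simp only [Fin.sum_univ_eight, hd3, hd4] at h07
  have h07_4 := congrFun h07 4
  simp at h07_4
  clear h07

  have hcs : ∀ x : K, x * s = 0 → x = 0 := fun x h => (mul_eq_zero.mp h).resolve_right hs
  field_simp at h03_3 h03_5 h03_6 h37_1 h37_2 h37_3 h31_7 h32_7 h53_0 h63_0
  have z01 := h03_1.resolve_left hs
  have z02 := h03_2.resolve_left hs
  have z04 := h03_4.resolve_left hs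
  have z07 := h03_7.resolve_left hs
  have z03 : d (bx 0) 3 = 0 := hcanc _ (by linear_combination -h03_3)
  have z05 : d (bx 0) 5 = 0 := hcanc _ (by linear_combination -h03_5)
  have z06 : d (bx 0) 6 = 0 := hcanc _ (by linear_combination -h03_6)
  have z70 := h37_0.resolve_left hs
  have z74 := h37_4.resolve_left hs
  have z75 := h37_5.resolve_left hs
  have z76 := h37_6.resolve_left hs
  have z71 : d (bx 7) 1 = 0 := hcanc _ (by linear_combination -h37_1)
  have z72 : d (bx 7) 2 = 0 := hcanc _ (by linear_combination -h37_2)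
  have z73 : d (bx 7) 3 = 0 := hcanc _ (by linear_combination -h37_3)
  have z10 := h31_0.resolve_left hs
  have z14 := h31_4.resolve_left hs
  have z15 := h31_5.resolve_left hs
  have z16 := h31_6.resolve_left hs
  have z17 : d (bx 1) 7 = 0 := hcanc _ (by linear_combination h31_7)
  have z13 := h14_3.resolve_left hs
  have z20 := h32_0.resolve_left hs
  have z24 := h32_4.resolve_left hs
  have z25 := h32_5.resolve_left hs
  have z26 := h32_6.resolve_left hs
  have z27 : d (bx 2) 7 = 0 := hcanc _ (by linear_combination h32_7)
  have z23 := h24_3.resolve_left hs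
  have z51 := h53_1.resolve_left hs
  have z52 := h53_2.resolve_left hs
  have z54 := h53_4.resolve_left hs
  have z57 := h53_7.resolve_left hs
  have z50 : d (bx 5) 0 = 0 := hcanc _ (by linear_combination h53_0)
  have z53 := h35_3.resolve_right hs
  have z61 := h63_1.resolve_left hs
  have z62 := h63_2.resolve_left hs
  have z64 := h63_4.resolve_left hs
  have z67 := h63_7.resolve_left hs
  have z60 : d (bx 6) 0 = 0 := hcanc _ (by linear_combination h63_0)
  have z63 := h36_3.resolve_right hs
  -- the off-diagonal pairs
  field_simp at h15_3 h26_3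
  have z12 : d (bx 1) 2 = 0 :=
    hcs _ (hcanc _ (by linear_combination s^3 * h15_3 + h51_4))
  have z56 : d (bx 5) 6 = 0 := hcs _ (by linear_combination -s * h15_3 + s^3 * z12)
  have z21 : d (bx 2) 1 = 0 :=
    hcs _ (hcanc _ (by linear_combination s * h26_3 + s^2 * h62_4))
  have z65 : d (bx 6) 5 = 0 := hcs _ (by linear_combination -h62_4 + s^3 * z21)
  -- diagonal values
  have v22 : d (bx 2) 2 = d (bx 0) 0 - d (bx 1) 1 := by
    field_simp at h12_0
    have h := hcs _ (hcs _ (show (d (bx 2) 2 - (d (bx 0) 0 - d (bx 1) 1)) * s * s = 0 by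
      linear_combination s^2 * h12_0))
    linear_combination h
  have v66 : d (bx 6) 6 = -(d (bx 1) 1) := by
    field_simp at h16_3; linear_combination -h16_3
  have v55 : d (bx 5) 5 = -(d (bx 0) 0 - d (bx 1) 1) := by
    field_simp at h25_3; rw [v22] at h25_3
    have h := hcs _ (show (d (bx 5) 5 + (d (bx 0) 0 - d (bx 1) 1)) * s = 0 by
      linear_combination s * h25_3)
    linear_combination h
  have v77 : d (bx 7) 7 = -(d (bx 0) 0) := by
    field_simp at h07_4; linear_combination -h07_4
  refine ⟨d (bx 0) 0, d (bx 1) 1, ?_, ?_, ?_, ?_, ?_, ?_⟩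
  · funext k; fin_cases k <;> simp [z01, z02, z03, z04, z05, z06, z07]
  · funext k; fin_cases k <;> simp [z70, z71, z72, z73, z74, z75, z76, v77]
  · funext k; fin_cases k <;> simp [z10, z12, z13, z14, z15, z16, z17]
  · funext k; fin_cases k <;> simp [z60, z61, z62, z63, z64, z65, z67, v66]
  · funext k; fin_cases k <;> simp [z20, z21, z23, z24, z25, z26, z27, v22]
  · funext k; fin_cases k <;> simp [z50, z51, z52, z53, z54, z56, z57, v55]
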